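/- For n ≥ 4 and m ≥ 2, the metric dimension of (Kₙ × Pₘ) ⊙ K₁ equals n − 1. -/

import Mathlib

open SimpleGraph

/-- Corona `G ⊙ K₁`: attach to each vertex `v` (as `Sum.inl v`) a pendant vertex `Sum.inr v`. -/
def corona {V : Type*} (G : SimpleGraph V) : SimpleGraph (V ⊕ V) :=
  SimpleGraph.fromRel (fun a b =>
    match a, b with
    | Sum.inl x, Sum.inl y => G.Adj x y
    | Sum.inl x, Sum.inr y => x = y
    | _, _ => False)

/-- `S` is a resolving set for `G`: distinct vertices have distinct distance vectors to `S`. -/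
def IsResolving {V : Type*} (G : SimpleGraph V) (S : Set V) : Prop :=
  ∀ u v : V, (∀ s ∈ S, G.dist u s = G.dist v s) → u = v

/-- Metric dimension: minimum cardinality of a resolving set. -/
noncomputable def metricDim {V : Type*} [Fintype V] (G : SimpleGraph V) : ℕ :=
  sInf {k | ∃ S : Finset V, S.card = k ∧ IsResolving G (↑S : Set V)}

/-!
Two columns of `Kₙ □ Pₘ` carrying no landmark are twins: swapping them is an automorphism of the
corona fixing every landmark, so a resolving set meets all columns but at most one, and
`n - 1 ≤ dim`. Conversely, a vertex over `(c, r)` at level `t` (`1` on the base, `2` on a pendant)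
lies at distance `[c ≠ a] + |r - i| + t` from the pendant over `(a, i)`, unless it is that
pendant; the pendants over row `0` in columns `0, …, n - 3` and over the last row in column
`n - 2` read off `c`, `r` and `t`.
-/

namespace SimpleGraph

variable {V W : Type*} {G : SimpleGraph V} {H : SimpleGraph W}

theorem edist_le_edist_of_map_adj (f : V → W)
    (hf : ∀ ⦃a b⦄, G.Adj a b → H.Adj (f a) (f b) ∨ f a = f b) (u v : V) :
    H.edist (f u) (f v) ≤ G.edist u v := by
  have hwalk {a b : V} (p : G.Walk a b) : H.edist (f a) (f b) ≤ p.length := by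
    induction p with
    | nil => simp
    | cons hadj p ih =>
      calc H.edist (f _) (f _) ≤ H.edist (f _) (f _) + H.edist (f _) (f _) :=
            SimpleGraph.edist_triangle
        _ ≤ 1 + p.length := add_le_add (edist_le_one_iff_adj_or_eq.2 (hf hadj)) ih
        _ = _ := by rw [Walk.length_cons, Nat.cast_succ, add_comm]
  by_cases huv : G.Reachable u v
  · obtain ⟨p, hp⟩ := huv.exists_walk_length_eq_edist
    exact hp ▸ hwalk p
  · simp [edist_eq_top_of_not_reachable huv]

theorem Iso.edist_eq (φ : G ≃g H) (u v : V) : H.edist (φ u) (φ v) = G.edist u v := by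
  refine le_antisymm (edist_le_edist_of_map_adj φ (fun _ _ h ↦ .inl (φ.map_adj_iff.2 h)) u v) ?_
  simpa using edist_le_edist_of_map_adj φ.symm (fun _ _ h ↦ .inl (φ.symm.map_adj_iff.2 h)) (φ u) (φ v)

theorem Iso.dist_eq (φ : G ≃g H) (u v : V) : H.dist (φ u) (φ v) = G.dist u v := by
  simp only [dist, φ.edist_eq]

theorem edist_eq_edist_add_one_of_forall_adj_iff {u v w : V} (hv : ∀ z, G.Adj v z ↔ z = w)
    (hu : u ≠ v) : G.edist u v = G.edist u w + 1 := by
  have hvw : G.Adj v w := (hv w).2 rfl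
  refine le_antisymm ?_ ?_
  · calc G.edist u v ≤ G.edist u w + G.edist w v := SimpleGraph.edist_triangle
      _ = G.edist u w + 1 := by rw [edist_eq_one_iff_adj.2 hvw.symm]
  by_cases huv : G.Reachable u v
  · obtain ⟨p, hp⟩ := huv.exists_walk_length_eq_edist
    have hnil : ¬ p.reverse.Nil := Walk.not_nil_of_ne hu.symm
    have hsnd : p.reverse.snd = w := (hv _).1 (p.reverse.adj_snd hnil)
    calc G.edist u w + 1 = G.edist w u + 1 := by rw [edist_comm]
      _ ≤ p.reverse.tail.length + 1 := by
          gcongr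
          rw [← hsnd]
          exact edist_le _
      _ = G.edist u v := by
          rw [← hp, ← Walk.length_reverse p, ← Walk.length_tail_add_one hnil, Nat.cast_succ]
  · simp [edist_eq_top_of_not_reachable huv]

theorem pathGraph_edist {m : ℕ} (i j : Fin m) : (pathGraph m).edist i j = Nat.dist i j := by
  refine le_antisymm ?_ ?_
  · wlog hij : i ≤ j generalizing i j
    · rw [edist_comm, Nat.dist_comm]
      exact this j i (le_of_not_ge hij)
    obtain ⟨d, hd⟩ := Nat.exists_eq_add_of_le (Fin.le_def.1 hij)
    rw [Nat.dist_eq_sub_of_le hij, hd, add_tsub_cancel_left]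
    induction d generalizing j with
    | zero => simp [show j = i from Fin.ext hd]
    | succ d ih =>
      let j' : Fin m := ⟨i + d, by omega⟩
      have hadj : (pathGraph m).Adj j' j := pathGraph_adj.2 (.inl (by simp [j', hd]; omega))
      calc (pathGraph m).edist i j ≤ (pathGraph m).edist i j' + (pathGraph m).edist j' j :=
            SimpleGraph.edist_triangle
        _ ≤ d + 1 := add_le_add (ih j' (Fin.le_def.2 (by simp [j'])) rfl)
            (edist_eq_one_iff_adj.2 hadj).le
        _ = (d + 1 : ℕ) := by push_cast; rfl
  · have hwalk {i j : Fin m} (p : (pathGraph m).Walk i j) : Nat.dist i j ≤ p.length := by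
      induction p with
      | nil => simp
      | cons hadj p ih =>
        rw [pathGraph_adj] at hadj
        rw [Walk.length_cons]
        unfold Nat.dist at ih ⊢
        omega
    obtain ⟨p, hp⟩ := (pathGraph_preconnected m i j).exists_walk_length_eq_edist
    rw [← hp]
    exact_mod_cast hwalk p


def Iso.boxProd {V' W' : Type*} {G' : SimpleGraph V'} {H' : SimpleGraph W'} (φ : G ≃g G')
    (ψ : H ≃g H') : G.boxProd H ≃g G'.boxProd H' where
  toEquiv := Equiv.prodCongr φ.toEquiv ψ.toEquiv
  map_rel_iff' := by
    rintro ⟨a, x⟩ ⟨b, y⟩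
    simp [φ.map_adj_iff, ψ.map_adj_iff]

theorem edist_top_boxProd_pathGraph {α : Type*} [DecidableEq α] {m : ℕ} (x y : α × Fin m) :
    ((⊤ : SimpleGraph α) □ pathGraph m).edist x y =
      ((if x.1 = y.1 then 0 else 1) + Nat.dist x.2 y.2 : ℕ) := by
  rw [edist_boxProd, edist_top, pathGraph_edist]
  split_ifs <;> simp

end SimpleGraph

section Corona

variable {V W : Type*} {G : SimpleGraph V} {H : SimpleGraph W}

@[simp] theorem corona_adj_inl_inl {x y : V} :
    (corona G).Adj (.inl x) (.inl y) ↔ G.Adj x y := by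
  simp only [corona, fromRel_adj, ne_eq, Sum.inl.injEq]
  exact ⟨fun h ↦ h.2.elim id fun h ↦ h.symm, fun h ↦ ⟨h.ne, .inl h⟩⟩

@[simp] theorem corona_adj_inl_inr {x y : V} : (corona G).Adj (.inl x) (.inr y) ↔ x = y := by
  simp [corona]

@[simp] theorem corona_adj_inr_inl {x y : V} : (corona G).Adj (.inr x) (.inl y) ↔ x = y := by
  simp [corona, eq_comm]

@[simp] theorem corona_adj_inr_inr {x y : V} : ¬ (corona G).Adj (.inr x) (.inr y) := by
  simp [corona]

theorem corona_adj_inr_iff {x : V} (z : V ⊕ V) : (corona G).Adj (.inr x) z ↔ z = .inl x := by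
  rcases z with z | z <;> simp [eq_comm]

def SimpleGraph.Iso.corona (φ : G ≃g H) : corona G ≃g corona H where
  toEquiv := Equiv.sumCongr φ.toEquiv φ.toEquiv
  map_rel_iff' := by rintro (x | x) (y | y) <;> simp [φ.map_adj_iff]

theorem edist_corona_inl_inl (x y : V) : (corona G).edist (.inl x) (.inl y) = G.edist x y := by
  refine le_antisymm ?_ ?_
  · exact edist_le_edist_of_map_adj Sum.inl (fun _ _ h ↦ .inl (corona_adj_inl_inl.2 h)) x y
  · refine edist_le_edist_of_map_adj (Sum.elim id id) ?_ (.inl x) (.inl y)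
    rintro (a | a) (b | b) h <;> simp_all

theorem edist_corona_of_ne_inr {u : V ⊕ V} {y : V} (hu : u ≠ .inr y) :
    (corona G).edist u (.inr y) = (corona G).edist u (.inl y) + 1 :=
  edist_eq_edist_add_one_of_forall_adj_iff corona_adj_inr_iff hu

theorem edist_corona_inr_inl (x y : V) :
    (corona G).edist (.inr x) (.inl y) = G.edist x y + 1 := by
  rw [edist_comm, edist_corona_of_ne_inr (by simp), edist_corona_inl_inl, edist_comm]

theorem edist_corona_inr_of_ne {u : V ⊕ V} {y : V} (hu : u ≠ .inr y) :
    (corona G).edist u (.inr y) = G.edist (u.elim id id) y + if u.isLeft then 1 else 2 := by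
  rw [edist_corona_of_ne_inr hu]
  rcases u with x | x
  · simp [edist_corona_inl_inl]
  · simp [edist_corona_inr_inl, add_assoc, one_add_one_eq_two]

theorem corona_preconnected (hG : G.Preconnected) : (corona G).Preconnected := by
  have h (u : V ⊕ V) (y : V) : (corona G).Reachable u (.inl y) := by
    refine reachable_of_edist_ne_top ?_
    rcases u with x | x
    · simpa [edist_corona_inl_inl, edist_ne_top_iff_reachable] using hG x y
    · simpa [edist_corona_inr_inl, edist_ne_top_iff_reachable] using hG x y
  intro u v
  exact (h u (v.elim id id)).trans (h v _).symm

end Corona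

section Resolving

variable {V : Type*} {G : SimpleGraph V} {S : Set V}

theorem isResolving_of_forall_notMem (hG : G.Preconnected)
    (h : ∀ u ∉ S, ∀ v ∉ S, (∀ s ∈ S, G.dist u s = G.dist v s) → u = v) : IsResolving G S := by
  have hmem {u v : V} (hu : u ∈ S) (huv : ∀ s ∈ S, G.dist u s = G.dist v s) : u = v := by
    have : G.dist v u = 0 := by rw [← huv u hu, dist_self]
    exact ((hG v u).dist_eq_zero_iff.1 this).symm
  intro u v huv
  by_cases hu : u ∈ S
  · exact hmem hu huv
  by_cases hv : v ∈ S
  · exact (hmem hv fun s hs ↦ (huv s hs).symm).symm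
  exact h u hu v hv huv

theorem IsResolving.eq_of_iso (hS : IsResolving G S) (φ : G ≃g G) (hφ : ∀ s ∈ S, φ s = s)
    (u : V) : φ u = u :=
  hS _ _ fun s hs ↦ by conv_lhs => rw [← hφ s hs, φ.dist_eq]

theorem metricDim_eq_of_isResolving [Fintype V] {S : Finset V} (hS : IsResolving G S)
    (hmin : ∀ T : Finset V, IsResolving G T → S.card ≤ T.card) : metricDim G = S.card :=
  le_antisymm (Nat.sInf_le ⟨S, rfl, hS⟩) <| le_csInf ⟨_, S, rfl, hS⟩ <| by
    rintro _ ⟨T, rfl, hT⟩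
    exact hmin T hT

end Resolving

theorem card_le_card_add_one_of_isResolving {α β : Type*} [Fintype α] [Nonempty β]
    {H : SimpleGraph β} {S : Finset ((α × β) ⊕ (α × β))}
    (hS : IsResolving (corona ((⊤ : SimpleGraph α) □ H)) S) : Fintype.card α ≤ S.card + 1 := by
  classical
  set C := S.image fun s ↦ (s.elim id id).1
  have hC : ∀ a ∉ C, ∀ b ∉ C, a = b := by
    intro a ha b hb
    let φ := (Iso.boxProd (Iso.completeGraph (Equiv.swap a b)) (.refl : H ≃g H)).corona
    have hfix : ∀ s ∈ (S : Set _), φ s = s := by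
      intro s hs
      have hsa : (s.elim id id).1 ≠ a := fun h ↦ ha (Finset.mem_image.2 ⟨s, hs, h⟩)
      have hsb : (s.elim id id).1 ≠ b := fun h ↦ hb (Finset.mem_image.2 ⟨s, hs, h⟩)
      rcases s with ⟨c, x⟩ | ⟨c, x⟩ <;>
        simp_all [φ, Iso.corona, Iso.boxProd, Iso.completeGraph, Equiv.swap_apply_of_ne_of_ne]
    simpa [φ, Iso.corona, Iso.boxProd, Iso.completeGraph, eq_comm] using
      hS.eq_of_iso φ hfix (.inl (a, Classical.arbitrary β))
  calc Fintype.card α = C.card + (Finset.univ \ C).card := by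
        rw [Finset.card_sdiff_of_subset C.subset_univ, Finset.card_univ]
        have := C.card_le_univ
        omega
    _ ≤ S.card + 1 := add_le_add Finset.card_image_le (Finset.card_le_one.2 fun a ha b hb ↦
        hC a (Finset.mem_sdiff.1 ha).2 b (Finset.mem_sdiff.1 hb).2)

section Landmarks

variable {k l : ℕ}

-- With `n = k + 1` columns and `m = l + 1` rows; column `k` carries no landmark.
def landmark (k l : ℕ) (a : Fin (k + 1)) :
    (Fin (k + 1) × Fin (l + 1)) ⊕ (Fin (k + 1) × Fin (l + 1)) :=
  .inr (a, if (a : ℕ) = k - 1 then Fin.last l else 0)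

def landmarks (k l : ℕ) : Finset ((Fin (k + 1) × Fin (l + 1)) ⊕ (Fin (k + 1) × Fin (l + 1))) :=
  (Finset.univ.erase (Fin.last k)).image (landmark k l)

theorem landmark_injective (k l : ℕ) : Function.Injective (landmark k l) := by
  intro a b h
  simp only [landmark, Sum.inr.injEq, Prod.mk.injEq] at h
  exact h.1

theorem card_landmarks (k l : ℕ) : (landmarks k l).card = k := by
  simp [landmarks, Finset.card_image_of_injective _ (landmark_injective k l)]

theorem landmark_mem_landmarks {a : Fin (k + 1)} (ha : a ≠ Fin.last k) :
    landmark k l a ∈ landmarks k l := by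
  simpa [landmarks] using ⟨a, ha, rfl⟩

theorem dist_landmark {u : (Fin (k + 1) × Fin (l + 1)) ⊕ (Fin (k + 1) × Fin (l + 1))}
    {a : Fin (k + 1)} (hu : u ≠ landmark k l a) :
    (corona ((⊤ : SimpleGraph (Fin (k + 1))) □ pathGraph (l + 1))).dist u (landmark k l a) =
      (if (u.elim id id).1 = a then 0 else 1) +
        (if (a : ℕ) = k - 1 then l - (u.elim id id).2 else (u.elim id id).2) +
        if u.isLeft then 1 else 2 := by
  have hrow : Nat.dist (u.elim id id).2 (if (a : ℕ) = k - 1 then Fin.last l else 0 : Fin (l + 1)) =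
      if (a : ℕ) = k - 1 then l - (u.elim id id).2 else (u.elim id id).2 := by
    split_ifs
    · exact Nat.dist_eq_sub_of_le (u.elim id id).2.is_le
    · exact Nat.dist_zero_right _
  rw [SimpleGraph.dist, landmark, edist_corona_inr_of_ne hu, edist_top_boxProd_pathGraph, hrow]
  split_ifs <;> rfl

/- Two low columns `0, 1` fix the height `r + t`; the low landmarks then identify a column below
`k - 1`, and the top landmark separates the remaining columns `k - 1`, `k` and the rows. -/
theorem eq_of_forall_landmark_dist_eq {t t' : ℕ} (hk : 3 ≤ k) {c c' : Fin (k + 1)}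
    {r r' : Fin (l + 1)}
    (h : ∀ a : Fin (k + 1), a ≠ Fin.last k →
      (if c = a then 0 else 1) + (if (a : ℕ) = k - 1 then l - r else r) + t =
        (if c' = a then 0 else 1) + (if (a : ℕ) = k - 1 then l - r' else r') + t') :
    c = c' ∧ r = r' ∧ t = t' := by
  have hlow (a : Fin (k + 1)) (ha : (a : ℕ) < k - 1) :
      (if c = a then 0 else 1) + (r : ℕ) + t = (if c' = a then 0 else 1) + r' + t' := by
    simpa [ha.ne] using h a (by simp [Fin.ext_iff]; omega)
  have hheight : (r : ℕ) + t = r' + t' := by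
    have h0 := hlow ⟨0, by omega⟩ (by simp; omega)
    have h1 := hlow ⟨1, by omega⟩ (by simp; omega)
    simp only [Fin.ext_iff] at h0 h1
    split_ifs at h0 h1 <;> omega
  have hcol (a : Fin (k + 1)) (ha : (a : ℕ) < k - 1) : c = a ↔ c' = a := by
    have := hlow a ha
    split_ifs at this <;> grind
  have htop := h ⟨k - 1, by omega⟩ (by simp [Fin.ext_iff]; omega)
  simp only [if_true] at htop
  have hr := r.is_le
  have hr' := r'.is_le
  have hcc : c = c' := by
    by_cases hc : (c : ℕ) < k - 1
    · exact ((hcol c hc).1 rfl).symm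
    by_cases hc' : (c' : ℕ) < k - 1
    · exact (hcol c' hc').2 rfl
    simp only [Fin.ext_iff] at htop ⊢
    split_ifs at htop <;> omega
  subst hcc
  refine ⟨rfl, Fin.ext ?_, ?_⟩ <;> omega

theorem isResolving_landmarks (hk : 3 ≤ k) :
    IsResolving (corona ((⊤ : SimpleGraph (Fin (k + 1))) □ pathGraph (l + 1))) ↑(landmarks k l) := by
  refine isResolving_of_forall_notMem
    (corona_preconnected (preconnected_top.boxProd (pathGraph_preconnected _))) ?_
  intro u hu v hv huv
  have hne {w} (hw : w ∉ (landmarks k l : Set _)) {a : Fin (k + 1)} (ha : a ≠ Fin.last k) :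
      w ≠ landmark k l a :=
    fun h ↦ hw (h ▸ landmark_mem_landmarks ha)
  obtain ⟨hc, hr, ht⟩ := eq_of_forall_landmark_dist_eq hk fun a ha ↦ by
    simpa only [dist_landmark (hne hu ha), dist_landmark (hne hv ha)] using
      huv _ (landmark_mem_landmarks ha)
  rcases u with ⟨c, r⟩ | ⟨c, r⟩ <;> rcases v with ⟨c', r'⟩ | ⟨c', r'⟩ <;> simp_all

end Landmarks

theorem stmt_6 (n m : ℕ) (hn : 4 ≤ n) (hm : 2 ≤ m) :
    metricDim (corona ((⊤ : SimpleGraph (Fin n)) □ pathGraph m)) = n - 1 := by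
  obtain ⟨k, rfl⟩ : ∃ k, n = k + 1 := ⟨n - 1, by omega⟩
  obtain ⟨l, rfl⟩ : ∃ l, m = l + 1 := ⟨m - 1, by omega⟩
  rw [metricDim_eq_of_isResolving (isResolving_landmarks (by omega)) fun T hT ↦ ?_, card_landmarks]
  · simp
  · have := card_le_card_add_one_of_isResolving hT
    rw [Fintype.card_fin] at this
    rw [card_landmarks]
    omega
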